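/- arXiv:2412.09367 — 3 statements merged into one kernel-verified Lean document; each statement's English description precedes it below -/
import Mathlib

section
/- For all integers s, t ≥ 2 there exist constants L₀ > 0 and c, C > 0 (depending only on s and t) such that the following holds. Let G be a bipartite graph with bipartition U ∪ V, where |U| ≤ |V|, and suppose G has exactly L·|V|^{2−1/s} edges with L ≥ L₀. Then there exists a collection 𝒢 of copies of K_{s,t} in G, each having its part of size s contained in U, such that |𝒢| ≥ c·L^{st}·|V|^{s}, and such that every set of edges σ' ⊆ E(G) with |σ'_v ∩ U| = a ≥ 1 and |σ'_v ∩ V| = b ≥ 1 satisfies deg_𝒢(σ') ≤ C·(L·|V|^{1−1/s})^{s−a}·(L^{s})^{t−b}. -/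
open Finset Real

/-- `KstExp s t r` : the `r`-expansion of the complete bipartite graph `K_{s,t}`.
For `r = 2` this is `K_{s,t}` itself. -/
def KstExp (s t r : ℕ) :
    Finset (Finset (Fin s ⊕ (Fin t ⊕ Fin s × Fin t × Fin (r - 2)))) :=
  (Finset.univ : Finset (Fin s × Fin t)).image fun ij =>
    insert (Sum.inl ij.1) (insert (Sum.inr (Sum.inl ij.2))
      ((Finset.univ : Finset (Fin (r - 2))).image fun k => Sum.inr (Sum.inr (ij.1, ij.2, k))))

open scoped Classical in
/-- `colDeg 𝒢 σ` : the number of members of the collection `𝒢` containing `σ`. -/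
noncomputable def colDeg {X : Type*} (𝒢 : Finset (Finset X)) (σ : Finset X) : ℕ :=
  (𝒢.filter fun S => σ ⊆ S).card

namespace StmtAux

variable {α : Type} [DecidableEq α]

lemma exists_partition (W : Finset α) (h : ℕ) :
    ∃ P : Finset (Finset α), P.card = W.card / h ∧
      (∀ β ∈ P, β ⊆ W ∧ β.card = h) ∧
      (∀ β ∈ P, ∀ β' ∈ P, β ≠ β' → Disjoint β β') := by
  rcases Nat.eq_zero_or_pos h with hh | hh
  · exact ⟨∅, by simp [hh], by simp, by simp⟩
  suffices H : ∀ (N : ℕ) (W : Finset α), W.card ≤ N → ∃ P : Finset (Finset α),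
      P.card = W.card / h ∧ (∀ β ∈ P, β ⊆ W ∧ β.card = h) ∧
      (∀ β ∈ P, ∀ β' ∈ P, β ≠ β' → Disjoint β β') from H W.card W le_rfl
  intro N
  induction N with
  | zero =>
    intro W hW
    have : W.card = 0 := Nat.le_zero.1 hW
    exact ⟨∅, by simp [this], by simp, by simp⟩
  | succ N ih =>
    intro W hW
    by_cases hlt : W.card < h
    · exact ⟨∅, by simp [Nat.div_eq_of_lt hlt], by simp, by simp⟩
    push_neg at hlt
    obtain ⟨β, hβW, hβcard⟩ := Finset.exists_subset_card_eq (s := W) (n := h) hlt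
    obtain ⟨P', h1, h2, h3⟩ := ih (W \ β) (by rw [card_sdiff_of_subset hβW]; omega)
    have hβP' : β ∉ P' := by
      intro hmem
      have hsub := (h2 β hmem).1
      have hne : β.Nonempty := by rw [← Finset.card_pos, hβcard]; exact hh
      obtain ⟨x, hx⟩ := hne
      exact (Finset.mem_sdiff.1 (hsub hx)).2 hx
    refine ⟨insert β P', ?_, ?_, ?_⟩
    · have hw : W.card = (W.card - h) + h := by omega
      have hdiv : (W.card - h) / h + 1 = W.card / h := by
        conv_rhs => rw [hw]
        rw [Nat.add_div_right _ hh]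
      rw [Finset.card_insert_of_notMem hβP', h1, card_sdiff_of_subset hβW, hβcard, hdiv]
    · intro β' hβ'
      rcases Finset.mem_insert.1 hβ' with rfl | hβ'
      · exact ⟨hβW, hβcard⟩
      · exact ⟨((h2 β' hβ').1).trans (Finset.sdiff_subset), (h2 β' hβ').2⟩
    · intro β₁ hβ₁ β₂ hβ₂ hne
      rcases Finset.mem_insert.1 hβ₁ with h₁' | hβ₁' <;>
        rcases Finset.mem_insert.1 hβ₂ with h₂' | hβ₂'
      · exact absurd (h₁'.trans h₂'.symm) hne
      · subst h₁'; exact Finset.disjoint_sdiff.mono_right (h2 β₂ hβ₂').1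
      · subst h₂'; exact (Finset.disjoint_sdiff.mono_right (h2 β₁ hβ₁').1).symm
      · exact h3 β₁ hβ₁' β₂ hβ₂' hne

lemma card_superset_le (W B : Finset α) (k : ℕ) (hB : B ⊆ W) :
    ((W.powersetCard k).filter fun T => B ⊆ T).card ≤
      (W.card - B.card).choose (k - B.card) := by
  have h1 : ((W.powersetCard k).filter fun T => B ⊆ T).card ≤
      ((W \ B).powersetCard (k - B.card)).card := by
    apply Finset.card_le_card_of_injOn (fun T => T \ B)
    · intro T hT
      obtain ⟨hT1, hBT⟩ := Finset.mem_filter.1 hT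
      obtain ⟨hTW, hTk⟩ := Finset.mem_powersetCard.1 hT1
      refine Finset.mem_powersetCard.2 ⟨Finset.sdiff_subset_sdiff hTW Subset.rfl, ?_⟩
      rw [card_sdiff_of_subset hBT, hTk]
    · intro T₁ hT₁ T₂ hT₂ heq
      simp only [Finset.coe_filter, Set.mem_setOf_eq] at hT₁ hT₂
      have e1 := Finset.sdiff_union_of_subset hT₁.2
      have e2 := Finset.sdiff_union_of_subset hT₂.2
      simp only at heq
      rw [← e1, ← e2, heq]
  rwa [Finset.card_powersetCard, card_sdiff_of_subset hB] at h1

lemma natdiv_real (x h : ℕ) (hh : 0 < h) : (x : ℝ) / h - 1 ≤ ((x / h : ℕ) : ℝ) := by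
  have hmod : x < h * (x / h) + h := by
    have h1 := Nat.div_add_mod x h
    have h2 := Nat.mod_lt x hh
    omega
  have hh' : (0 : ℝ) < h := by exact_mod_cast hh
  have : (x : ℝ) < h * ((x / h : ℕ) : ℝ) + h := by exact_mod_cast hmod
  rw [sub_le_iff_le_add, div_le_iff₀ hh']
  nlinarith [this]

lemma natdiv_real' (x h : ℕ) (hh : 0 < h) : (x : ℝ) ≤ h * ((x / h : ℕ) : ℝ) + h := by
  have hmod : x ≤ h * (x / h) + h := by
    have h1 := Nat.div_add_mod x h
    have h2 := Nat.mod_lt x hh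
    omega
  exact_mod_cast hmod

def edgeF (S T : Finset α) : Finset (Finset α) := (S ×ˢ T).image fun p => {p.1, p.2}

lemma mem_edgeF {S T : Finset α} {e : Finset α} :
    e ∈ edgeF S T ↔ ∃ u ∈ S, ∃ v ∈ T, e = ({u, v} : Finset α) := by
  simp only [edgeF, Finset.mem_image, Finset.mem_product, Prod.exists]
  constructor
  · rintro ⟨u, v, ⟨hu, hv⟩, rfl⟩; exact ⟨u, hu, v, hv, rfl⟩
  · rintro ⟨u, hu, v, hv, rfl⟩; exact ⟨u, v, ⟨hu, hv⟩, rfl⟩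

lemma biUnion_edgeF {S T : Finset α} (hS : S.Nonempty) (hT : T.Nonempty) :
    (edgeF S T).biUnion id = S ∪ T := by
  ext x
  simp only [Finset.mem_biUnion, id_eq, Finset.mem_union]
  constructor
  · rintro ⟨e, he, hx⟩
    obtain ⟨u, hu, v, hv, rfl⟩ := mem_edgeF.1 he
    rcases Finset.mem_insert.1 hx with rfl | hx
    · exact Or.inl hu
    · rw [Finset.mem_singleton.1 hx]; exact Or.inr hv
  · rintro (hx | hx)
    · obtain ⟨v, hv⟩ := hT
      exact ⟨{x, v}, mem_edgeF.2 ⟨x, hx, v, hv, rfl⟩, by simp⟩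
    · obtain ⟨u, hu⟩ := hS
      exact ⟨{u, x}, mem_edgeF.2 ⟨u, hu, x, hx, rfl⟩, by simp⟩

lemma edgeF_recover {U V S T : Finset α} (hUV : Disjoint U V) (hSU : S ⊆ U) (hTV : T ⊆ V)
    (hS : S.Nonempty) (hT : T.Nonempty) :
    (edgeF S T).biUnion id ∩ U = S ∧ (edgeF S T).biUnion id ∩ V = T := by
  rw [biUnion_edgeF hS hT]
  constructor
  · ext x
    simp only [Finset.mem_inter, Finset.mem_union]
    constructor
    · rintro ⟨hx | hx, hxU⟩
      · exact hx
      · exact absurd hxU (Finset.disjoint_right.1 hUV (hTV hx))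
    · intro hx; exact ⟨Or.inl hx, hSU hx⟩
  · ext x
    simp only [Finset.mem_inter, Finset.mem_union]
    constructor
    · rintro ⟨hx | hx, hxV⟩
      · exact absurd hxV (Finset.disjoint_left.1 hUV (hSU hx))
      · exact hx
    · intro hx; exact ⟨Or.inr hx, hTV hx⟩

lemma edgeF_inj {U V S T S' T' : Finset α} (hUV : Disjoint U V)
    (hSU : S ⊆ U) (hTV : T ⊆ V) (hS : S.Nonempty) (hT : T.Nonempty)
    (hSU' : S' ⊆ U) (hTV' : T' ⊆ V) (hS' : S'.Nonempty) (hT' : T'.Nonempty)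
    (h : edgeF S T = edgeF S' T') : S = S' ∧ T = T' := by
  obtain ⟨e1, e2⟩ := edgeF_recover hUV hSU hTV hS hT
  obtain ⟨e1', e2'⟩ := edgeF_recover hUV hSU' hTV' hS' hT'
  rw [h] at e1 e2
  exact ⟨e1.symm.trans e1', e2.symm.trans e2'⟩

lemma KstExp_two (s t : ℕ) : KstExp s t 2 =
    (Finset.univ : Finset (Fin s × Fin t)).image
      (fun ij => ({Sum.inl ij.1, Sum.inr (Sum.inl ij.2)} :
        Finset (Fin s ⊕ (Fin t ⊕ Fin s × Fin t × Fin 0)))) := by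
  unfold KstExp
  rfl

lemma copy_witness {s t : ℕ} (hs : 0 < s) (ht : 0 < t) {U V S T : Finset α}
    (hUV : Disjoint U V) (hSU : S ⊆ U) (hTV : T ⊆ V)
    (hScard : S.card = s) (hTcard : T.card = t) :
    ∃ f : (Fin s ⊕ (Fin t ⊕ Fin s × Fin t × Fin 0)) → α,
      Function.Injective f ∧ edgeF S T = (KstExp s t 2).image (fun e => e.image f) ∧
      (∀ i : Fin s, f (Sum.inl i) ∈ U) ∧ (∀ j : Fin t, f (Sum.inr (Sum.inl j)) ∈ V) := by
  have eS := (Finset.equivFinOfCardEq hScard)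
  have eT := (Finset.equivFinOfCardEq hTcard)
  set f : (Fin s ⊕ (Fin t ⊕ Fin s × Fin t × Fin 0)) → α :=
    Sum.elim (fun i => ((eS.symm i : S) : α))
      (Sum.elim (fun j => ((eT.symm j : T) : α)) (fun p => p.2.2.elim0)) with hf
  have hfS : ∀ i, f (Sum.inl i) ∈ S := fun i => (eS.symm i).2
  have hfT : ∀ j, f (Sum.inr (Sum.inl j)) ∈ T := fun j => (eT.symm j).2
  refine ⟨f, ?_, ?_, fun i => hSU (hfS i), fun j => hTV (hfT j)⟩
  · intro x y hxy
    rcases x with i | j | p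
    · rcases y with i' | j' | p'
      · have : eS.symm i = eS.symm i' := Subtype.coe_injective hxy
        rw [eS.symm.injective this]
      · exfalso
        have hv : f (Sum.inl i) ∈ V := by rw [hxy]; exact hTV (hfT j')
        exact Finset.disjoint_left.1 hUV (hSU (hfS i)) hv
      · exact p'.2.2.elim0
    · rcases y with i' | j' | p'
      · exfalso
        have hv : f (Sum.inl i') ∈ V := by rw [← hxy]; exact hTV (hfT j)
        exact Finset.disjoint_left.1 hUV (hSU (hfS i')) hv
      · have : eT.symm j = eT.symm j' := Subtype.coe_injective hxy
        rw [eT.symm.injective this]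
      · exact p'.2.2.elim0
    · exact p.2.2.elim0
  · rw [KstExp_two, Finset.image_image]
    have hcomp : ∀ ij : Fin s × Fin t,
        (({Sum.inl ij.1, Sum.inr (Sum.inl ij.2)} :
          Finset (Fin s ⊕ (Fin t ⊕ Fin s × Fin t × Fin 0))).image f) =
          ({f (Sum.inl ij.1), f (Sum.inr (Sum.inl ij.2))} : Finset α) := by
      intro ij; simp
    ext e
    rw [mem_edgeF]
    simp only [Function.comp, Finset.mem_image, Finset.mem_univ, true_and]
    constructor
    · rintro ⟨u, hu, v, hv, rfl⟩
      refine ⟨(eS ⟨u, hu⟩, eT ⟨v, hv⟩), ?_⟩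
      rw [hcomp]
      simp only [hf, Sum.elim_inl, Sum.elim_inr, Equiv.symm_apply_apply]
    · rintro ⟨ij, rfl⟩
      rw [hcomp]
      exact ⟨f (Sum.inl ij.1), hfS ij.1, f (Sum.inr (Sum.inl ij.2)), hfT ij.2, rfl⟩

end StmtAux

set_option maxHeartbeats 4000000 in
theorem stmt_3 (s t : ℕ) (hs : 2 ≤ s) (ht : 2 ≤ t) :
    ∃ L₀ c C : ℝ, 0 < L₀ ∧ 0 < c ∧ 0 < C ∧
      ∀ (α : Type) [DecidableEq α] (U V : Finset α) (G : Finset (Finset α)) (L : ℝ),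
        Disjoint U V →
        -- G is bipartite with bipartition U ∪ V
        (∀ e ∈ G, e.card = 2 ∧ (e ∩ U).card = 1 ∧ (e ∩ V).card = 1) →
        U.card ≤ V.card →
        -- G has exactly L·|V|^{2-1/s} edges, L ≥ L₀
        (G.card : ℝ) = L * (V.card : ℝ) ^ (2 - 1 / (s : ℝ)) →
        L₀ ≤ L →
        ∃ 𝒢 : Finset (Finset (Finset α)),
          -- 𝒢 is a collection of copies of K_{s,t} in G with the part of size s inside U
          (∀ S ∈ 𝒢, S ⊆ G ∧
            ∃ f : (Fin s ⊕ (Fin t ⊕ Fin s × Fin t × Fin 0)) → α,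
              Function.Injective f ∧ S = (KstExp s t 2).image (fun e => e.image f) ∧
              (∀ i : Fin s, f (Sum.inl i) ∈ U) ∧ (∀ j : Fin t, f (Sum.inr (Sum.inl j)) ∈ V)) ∧
          -- |𝒢| ≥ c·L^{st}·|V|^s
          c * L ^ ((s : ℝ) * t) * (V.card : ℝ) ^ (s : ℝ) ≤ (𝒢.card : ℝ) ∧
          -- degree condition
          (∀ σ' : Finset (Finset α), σ' ⊆ G →
            1 ≤ ((σ'.biUnion id) ∩ U).card → 1 ≤ ((σ'.biUnion id) ∩ V).card →
            (colDeg 𝒢 σ' : ℝ) ≤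
              C * (L * (V.card : ℝ) ^ (1 - 1 / (s : ℝ)))
                    ^ ((s : ℝ) - (((σ'.biUnion id) ∩ U).card : ℝ)) *
                (L ^ (s : ℝ)) ^ ((t : ℝ) - (((σ'.biUnion id) ∩ V).card : ℝ))) := by
  have hs0 : 0 < s := by omega
  have ht0 : 0 < t := by omega
  set ε : ℝ := 1 / (3 * 4 ^ (s + 1)) with hεdef
  have hεpos : 0 < ε := by positivity
  refine ⟨4 * s + 6 * t * 4 ^ (s + 1) + 4, (ε / 2) ^ t / (s.factorial * t.factorial), 1,
    by positivity, by positivity, one_pos, ?_⟩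
  intro α _ U V G L hUV hbip hUVle hGcard hLL
  classical
  by_cases hV0 : V.card = 0
  · refine ⟨∅, by simp, ?_, ?_⟩
    · rw [hV0]
      push_cast
      rw [Real.zero_rpow (by positivity)]
      simp
    · intro σ' hσG hA1 hB1
      have hL0 : (0 : ℝ) < L := lt_of_lt_of_le (by positivity) hLL
      have h0 : colDeg (∅ : Finset (Finset (Finset α))) σ' = 0 := by
        unfold colDeg
        rw [Finset.filter_empty, Finset.card_empty]
      rw [h0]
      push_cast
      refine mul_nonneg (mul_nonneg zero_le_one (Real.rpow_nonneg ?_ _)) (Real.rpow_nonneg ?_ _)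
      · exact mul_nonneg hL0.le (Real.rpow_nonneg (Nat.cast_nonneg _) _)
      · exact Real.rpow_nonneg hL0.le _
  -- ===================== main case =====================
  have hn : 0 < V.card := Nat.pos_of_ne_zero hV0
  have hn0 : (0 : ℝ) < (V.card : ℝ) := by exact_mod_cast hn
  have hn1 : (1 : ℝ) ≤ (V.card : ℝ) := by exact_mod_cast hn
  have hL0 : (0 : ℝ) < L := lt_of_lt_of_le (by positivity) hLL
  have hLbig : (4 * (s : ℝ) + 6 * t * 4 ^ (s + 1) + 4) ≤ L := hLL
  have hL4 : (4 : ℝ) ≤ L := by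
    have h1 : (0 : ℝ) ≤ 4 * s + 6 * t * 4 ^ (s + 1) := by positivity
    linarith
  have hL1 : (1 : ℝ) ≤ L := by linarith
  have hL4s : 4 * (s : ℝ) ≤ L := by
    have h1 : (0 : ℝ) ≤ 6 * t * 4 ^ (s + 1) + 4 := by positivity
    linarith
  set n : ℝ := (V.card : ℝ) with hndef
  have hscast1 : (1 : ℝ) ≤ (s : ℝ) := by exact_mod_cast hs0
  have hexp0 : 0 ≤ 1 - 1 / (s : ℝ) := by
    have h1 : 1 / (s : ℝ) ≤ 1 := by
      rw [div_le_one (by linarith)]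
      linarith
    linarith
  have hnpow1 : (1 : ℝ) ≤ n ^ (1 - 1 / (s : ℝ)) := Real.one_le_rpow hn1 hexp0
  set d₀ : ℝ := L * n ^ (1 - 1 / (s : ℝ)) with hd₀def
  have hd₀pos : 0 < d₀ := mul_pos hL0 (Real.rpow_pos_of_pos hn0 _)
  have hLd₀ : L ≤ d₀ := by
    rw [hd₀def]
    calc L = L * 1 := (mul_one L).symm
      _ ≤ L * n ^ (1 - 1 / (s : ℝ)) := mul_le_mul_of_nonneg_left hnpow1 hL0.le
  have hd₀4 : (4 : ℝ) ≤ d₀ := le_trans hL4 hLd₀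
  have hd₀4s : 4 * (s : ℝ) ≤ d₀ := le_trans hL4s hLd₀
  have hLspos : (0 : ℝ) < L ^ s := pow_pos hL0 s
  have hLsL : L ≤ L ^ s := le_self_pow₀ hL1 (by omega)
  have h2t : (2 : ℝ) ≤ (t : ℝ) := by exact_mod_cast ht
  have hεL2t : 2 * (t : ℝ) ≤ ε * L ^ s := by
    have h1 : ε * (6 * t * 4 ^ (s + 1)) = 2 * t := by
      rw [hεdef]; field_simp; ring
    have h2 : (6 * (t : ℝ) * 4 ^ (s + 1)) ≤ L := by
      have h3 : (0 : ℝ) ≤ 4 * s + 4 := by positivity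
      linarith
    calc 2 * (t : ℝ) = ε * (6 * t * 4 ^ (s + 1)) := h1.symm
      _ ≤ ε * L := mul_le_mul_of_nonneg_left h2 hεpos.le
      _ ≤ ε * L ^ s := mul_le_mul_of_nonneg_left hLsL hεpos.le
  have hεLs1 : (1 : ℝ) ≤ ε * L ^ s := by linarith
  set h₁ : ℕ := ⌈d₀ / 2⌉₊ with hh₁def
  set h₂ : ℕ := ⌈ε * L ^ s⌉₊ with hh₂def
  have hh₁ge : d₀ / 2 ≤ (h₁ : ℝ) := Nat.le_ceil _
  have hh₁le : (h₁ : ℝ) ≤ 3 * d₀ / 4 := by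
    have h1 := Nat.ceil_lt_add_one (show (0 : ℝ) ≤ d₀ / 2 by linarith)
    rw [← hh₁def] at h1
    linarith
  have hh₁pos : 0 < h₁ := by
    have h1 : (0 : ℝ) < (h₁ : ℝ) := lt_of_lt_of_le (by linarith) hh₁ge
    exact_mod_cast h1
  have hsh₁ : s ≤ h₁ := by
    have h1 : (s : ℝ) ≤ (h₁ : ℝ) := by linarith
    exact_mod_cast h1
  have hh₁d₀ : (h₁ : ℝ) ≤ d₀ := by linarith
  have hh₂ge : ε * L ^ s ≤ (h₂ : ℝ) := Nat.le_ceil _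
  have hh₂le : (h₂ : ℝ) ≤ 2 * (ε * L ^ s) := by
    have h1 := Nat.ceil_lt_add_one (show (0 : ℝ) ≤ ε * L ^ s by positivity)
    rw [← hh₂def] at h1
    linarith
  have h4pow1 : (1 : ℝ) ≤ 4 ^ (s + 1) := one_le_pow₀ (by norm_num)
  have hεhalf : ε * 2 ≤ 1 := by
    rw [hεdef, div_mul_eq_mul_div, div_le_one (by positivity)]
    linarith
  have hh₂Ls : (h₂ : ℝ) ≤ L ^ s := by
    calc (h₂ : ℝ) ≤ 2 * (ε * L ^ s) := hh₂le
      _ = (ε * 2) * L ^ s := by ring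
      _ ≤ 1 * L ^ s := mul_le_mul_of_nonneg_right hεhalf hLspos.le
      _ = L ^ s := one_mul _
  have hth₂ : t ≤ h₂ := by
    have h1 : (t : ℝ) ≤ (h₂ : ℝ) := by linarith
    exact_mod_cast h1
  have hh₂pos : 0 < h₂ := by omega
  -- neighbourhoods and partitions
  set NN : α → Finset α := fun v => U.filter fun u => ({u, v} : Finset α) ∈ G with hNNdef
  have hNNU : ∀ v, NN v ⊆ U := fun v => Finset.filter_subset _ _
  have hGsum : G.card = ∑ v ∈ V, (NN v).card := by
    have hGeq : G = V.biUnion (fun v => (NN v).image fun u => ({u, v} : Finset α)) := by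
      ext e
      simp only [Finset.mem_biUnion, Finset.mem_image, hNNdef, Finset.mem_filter]
      constructor
      · intro he
        obtain ⟨h2, hU1, hV1⟩ := hbip e he
        obtain ⟨u, hu⟩ := Finset.card_eq_one.1 hU1
        obtain ⟨v, hv⟩ := Finset.card_eq_one.1 hV1
        have huU : u ∈ U := (Finset.mem_inter.1 (hu ▸ Finset.mem_singleton_self u)).2
        have hue : u ∈ e := (Finset.mem_inter.1 (hu ▸ Finset.mem_singleton_self u)).1
        have hvV : v ∈ V := (Finset.mem_inter.1 (hv ▸ Finset.mem_singleton_self v)).2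
        have hve : v ∈ e := (Finset.mem_inter.1 (hv ▸ Finset.mem_singleton_self v)).1
        have hune : u ≠ v := fun h => Finset.disjoint_left.1 hUV huU (h ▸ hvV)
        have hsub : ({u, v} : Finset α) ⊆ e := by
          intro x hx
          rcases Finset.mem_insert.1 hx with rfl | hx
          · exact hue
          · rw [Finset.mem_singleton.1 hx]; exact hve
        have hpair : ({u, v} : Finset α).card = 2 := Finset.card_pair hune
        have he' : e = {u, v} := (Finset.eq_of_subset_of_card_le hsub (by rw [h2, hpair])).symm
        exact ⟨v, hvV, u, ⟨huU, he' ▸ he⟩, he'.symm⟩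
      · rintro ⟨v, hv, u, ⟨huU, huG⟩, rfl⟩
        exact huG
    have hdisj : ∀ v₁ ∈ V, ∀ v₂ ∈ V, v₁ ≠ v₂ →
        Disjoint ((NN v₁).image fun u => ({u, v₁} : Finset α))
          ((NN v₂).image fun u => ({u, v₂} : Finset α)) := by
      intro v₁ hv₁ v₂ hv₂ hne
      rw [Finset.disjoint_left]
      intro e he₁ he₂
      simp only [Finset.mem_image] at he₁ he₂
      obtain ⟨u₁, hu₁, rfl⟩ := he₁
      obtain ⟨u₂, hu₂, heq⟩ := he₂
      have hv₁mem : v₁ ∈ ({u₂, v₂} : Finset α) := by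
        rw [heq]
        exact Finset.mem_insert_of_mem (Finset.mem_singleton_self _)
      rcases Finset.mem_insert.1 hv₁mem with h | h
      · exact Finset.disjoint_left.1 hUV (hNNU v₂ hu₂) (h ▸ hv₁)
      · exact hne (Finset.mem_singleton.1 h)
    rw [hGeq, Finset.card_biUnion hdisj]
    refine Finset.sum_congr rfl fun v hv => ?_
    apply Finset.card_image_of_injOn
    intro u₁ hu₁ u₂ hu₂ heq
    simp only at heq
    have hmem : u₁ ∈ ({u₂, v} : Finset α) := by
      rw [← heq]
      exact Finset.mem_insert_self _ _
    rcases Finset.mem_insert.1 hmem with h | h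
    · exact h
    · exact absurd (Finset.mem_singleton.1 h)
        (fun hh => Finset.disjoint_left.1 hUV (hNNU v (Finset.mem_coe.1 hu₁)) (hh ▸ hv))
  choose P hP1 hP2 hP3 using fun v => StmtAux.exists_partition (NN v) h₁
  set CN : Finset α → Finset α := fun S => V.filter fun v => ∃ β ∈ P v, S ⊆ β with hCNdef
  have hCNV : ∀ S, CN S ⊆ V := fun S => Finset.filter_subset _ _
  choose Q hQ1 hQ2 hQ3 using fun S : Finset α => StmtAux.exists_partition (CN S) h₂
  set 𝒢 : Finset (Finset (Finset α)) :=
    (U.powersetCard s).biUnion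
      (fun S => (Q S).biUnion fun γ => (γ.powersetCard t).image (StmtAux.edgeF S)) with h𝒢def
  have hmem𝒢 : ∀ K, K ∈ 𝒢 ↔ ∃ S ∈ U.powersetCard s, ∃ γ ∈ Q S, ∃ T ∈ γ.powersetCard t,
      StmtAux.edgeF S T = K := by
    intro K
    simp only [h𝒢def, Finset.mem_biUnion, Finset.mem_image]
  have hstruct : ∀ {S γ T : Finset α}, S ∈ U.powersetCard s → γ ∈ Q S → T ∈ γ.powersetCard t →
      S ⊆ U ∧ S.card = s ∧ S.Nonempty ∧ T ⊆ V ∧ T.card = t ∧ T.Nonempty ∧ T ⊆ CN S := by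
    intro S γ T hS hγ hT
    obtain ⟨hSU, hScard⟩ := Finset.mem_powersetCard.1 hS
    obtain ⟨hTγ, hTcard⟩ := Finset.mem_powersetCard.1 hT
    have hγCN := (hQ2 S γ hγ).1
    exact ⟨hSU, hScard, by rw [← Finset.card_pos, hScard]; omega,
      (hTγ.trans hγCN).trans (hCNV S), hTcard, by rw [← Finset.card_pos, hTcard]; omega,
      hTγ.trans hγCN⟩
  have hinj2 : ∀ {S γ T S' γ' T' : Finset α}, S ∈ U.powersetCard s → γ ∈ Q S →
      T ∈ γ.powersetCard t → S' ∈ U.powersetCard s → γ' ∈ Q S' → T' ∈ γ'.powersetCard t →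
      StmtAux.edgeF S T = StmtAux.edgeF S' T' → S = S' ∧ T = T' := by
    intro S γ T S' γ' T' hS hγ hT hS' hγ' hT' heq
    obtain ⟨hSU, _, hSne, hTV, _, hTne, _⟩ := hstruct hS hγ hT
    obtain ⟨hSU', _, hSne', hTV', _, hTne', _⟩ := hstruct hS' hγ' hT'
    exact StmtAux.edgeF_inj hUV hSU hTV hSne hTne hSU' hTV' hSne' hTne' heq
  refine ⟨𝒢, ?_, ?_, ?_⟩
  · -- bullet 1 : members are copies
    intro K hK
    obtain ⟨S, hS, γ, hγ, T, hT, hKe⟩ := (hmem𝒢 K).1 hK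
    obtain ⟨hSU, hScard, hSne, hTV, hTcard, hTne, hTCN⟩ := hstruct hS hγ hT
    constructor
    · intro e he
      rw [← hKe] at he
      obtain ⟨u, hu, v, hv, rfl⟩ := StmtAux.mem_edgeF.1 he
      have hvCN : v ∈ CN S := hTCN hv
      rw [hCNdef] at hvCN
      simp only [Finset.mem_filter] at hvCN
      obtain ⟨hvV, β, hβ, hSβ⟩ := hvCN
      have huNN : u ∈ NN v := (hP2 v β hβ).1 (hSβ hu)
      rw [hNNdef] at huNN
      simp only [Finset.mem_filter] at huNN
      exact huNN.2
    · obtain ⟨f, hfinj, hfim, hfU, hfV⟩ :=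
        StmtAux.copy_witness hs0 ht0 hUV hSU hTV hScard hTcard
      exact ⟨f, hfinj, by rw [← hKe]; exact hfim, hfU, hfV⟩
  · -- bullet 2 : the count lower bound
    have houter : ∀ S ∈ U.powersetCard s, ∀ S' ∈ U.powersetCard s, S ≠ S' →
        Disjoint ((Q S).biUnion fun γ => (γ.powersetCard t).image (StmtAux.edgeF S))
          ((Q S').biUnion fun γ => (γ.powersetCard t).image (StmtAux.edgeF S')) := by
      intro S hS S' hS' hne
      rw [Finset.disjoint_left]
      intro K hK hK'
      simp only [Finset.mem_biUnion, Finset.mem_image] at hK hK'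
      obtain ⟨γ, hγ, T, hT, hKe⟩ := hK
      obtain ⟨γ', hγ', T', hT', hKe'⟩ := hK'
      exact hne (hinj2 hS hγ hT hS' hγ' hT' (hKe.trans hKe'.symm)).1
    have hcard𝒢 : 𝒢.card = ∑ S ∈ U.powersetCard s, (Q S).card * h₂.choose t := by
      rw [h𝒢def, Finset.card_biUnion houter]
      refine Finset.sum_congr rfl fun S hS => ?_
      have hinner : ∀ γ ∈ Q S, ∀ γ' ∈ Q S, γ ≠ γ' →
          Disjoint ((γ.powersetCard t).image (StmtAux.edgeF S))
            ((γ'.powersetCard t).image (StmtAux.edgeF S)) := by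
        intro γ hγ γ' hγ' hne
        rw [Finset.disjoint_left]
        intro K hK hK'
        simp only [Finset.mem_image] at hK hK'
        obtain ⟨T, hT, hKe⟩ := hK
        obtain ⟨T', hT', hKe'⟩ := hK'
        have hTT : T = T' := (hinj2 hS hγ hT hS hγ' hT' (hKe.trans hKe'.symm)).2
        obtain ⟨hTγ, hTcard⟩ := Finset.mem_powersetCard.1 hT
        obtain ⟨hTγ', _⟩ := Finset.mem_powersetCard.1 hT'
        have hTne : T.Nonempty := by rw [← Finset.card_pos, hTcard]; omega
        obtain ⟨x, hx⟩ := hTne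
        exact Finset.disjoint_left.1 (hQ3 S γ hγ γ' hγ' hne) (hTγ hx) (hTγ' (hTT ▸ hx))
      rw [Finset.card_biUnion hinner]
      have hpiece : ∀ γ ∈ Q S, ((γ.powersetCard t).image (StmtAux.edgeF S)).card = h₂.choose t := by
        intro γ hγ
        have hinj : Set.InjOn (StmtAux.edgeF S) (γ.powersetCard t) := by
          intro T hT T' hT' heq
          exact (hinj2 hS hγ (Finset.mem_coe.1 hT) hS hγ (Finset.mem_coe.1 hT') heq).2
        rw [Finset.card_image_of_injOn hinj, Finset.card_powersetCard, (hQ2 S γ hγ).2]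
      rw [Finset.sum_congr rfl hpiece, Finset.sum_const, smul_eq_mul]
    have hsum1 : ∑ S ∈ U.powersetCard s, (CN S).card = ∑ v ∈ V, (P v).card * h₁.choose s := by
      have e1 : ∀ S : Finset α, (CN S).card
          = ∑ v ∈ V, if (∃ β ∈ P v, S ⊆ β) then 1 else 0 := by
        intro S
        simp only [hCNdef]
        exact Finset.card_filter _ _
      rw [Finset.sum_congr rfl fun S _ => e1 S, Finset.sum_comm]
      refine Finset.sum_congr rfl fun v hv => ?_
      have e0 : (∑ S ∈ U.powersetCard s, if (∃ β ∈ P v, S ⊆ β) then 1 else 0)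
          = ((U.powersetCard s).filter fun S => ∃ β ∈ P v, S ⊆ β).card :=
        (Finset.card_filter _ _).symm
      rw [e0]
      have e2 : (U.powersetCard s).filter (fun S => ∃ β ∈ P v, S ⊆ β)
          = (P v).biUnion fun β => β.powersetCard s := by
        ext S
        simp only [Finset.mem_filter, Finset.mem_powersetCard, Finset.mem_biUnion]
        constructor
        · rintro ⟨⟨hSU, hcard⟩, β, hβ, hSβ⟩
          exact ⟨β, hβ, hSβ, hcard⟩
        · rintro ⟨β, hβ, hSβ, hcard⟩
          exact ⟨⟨hSβ.trans ((hP2 v β hβ).1.trans (hNNU v)), hcard⟩, β, hβ, hSβ⟩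
      have hpdisj : ∀ β ∈ P v, ∀ β' ∈ P v, β ≠ β' →
          Disjoint (β.powersetCard s) (β'.powersetCard s) := by
        intro β hβ β' hβ' hne
        rw [Finset.disjoint_left]
        intro S hSβ hSβ'
        obtain ⟨hS1, hScard⟩ := Finset.mem_powersetCard.1 hSβ
        obtain ⟨hS2, _⟩ := Finset.mem_powersetCard.1 hSβ'
        have hSne : S.Nonempty := by rw [← Finset.card_pos, hScard]; omega
        obtain ⟨x, hx⟩ := hSne
        exact Finset.disjoint_left.1 (hP3 v β hβ β' hβ' hne) (hS1 hx) (hS2 hx)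
      rw [e2, Finset.card_biUnion hpdisj]
      have e3 : ∀ β ∈ P v, (β.powersetCard s).card = h₁.choose s := by
        intro β hβ
        rw [Finset.card_powersetCard, (hP2 v β hβ).2]
      rw [Finset.sum_congr rfl e3, Finset.sum_const, smul_eq_mul]
    -- pass to the reals
    set SSP : ℝ := ∑ v ∈ V, ((P v).card : ℝ) with hSSPdef
    set SSQ : ℝ := ∑ S ∈ U.powersetCard s, ((Q S).card : ℝ) with hSSQdef
    have hSSPnn : 0 ≤ SSP := Finset.sum_nonneg fun v _ => Nat.cast_nonneg _
    have hSSQnn : 0 ≤ SSQ := Finset.sum_nonneg fun S _ => Nat.cast_nonneg _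
    have hsfacpos : (0:ℝ) < (s.factorial : ℝ) := by exact_mod_cast s.factorial_pos
    have htfacpos : (0:ℝ) < (t.factorial : ℝ) := by exact_mod_cast t.factorial_pos
    have hGn : (G.card : ℝ) = d₀ * n := by
      rw [hGcard, hd₀def, show (2 - 1/(s:ℝ)) = (1 - 1/(s:ℝ)) + 1 by ring,
        Real.rpow_add hn0, Real.rpow_one]
      ring
    have hEle : (G.card : ℝ) ≤ (h₁ : ℝ) * SSP + n * h₁ := by
      have hstep : ∀ v ∈ V, ((NN v).card : ℝ) ≤ (h₁ : ℝ) * ((P v).card : ℝ) + h₁ := by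
        intro v hv
        rw [hP1 v]
        exact StmtAux.natdiv_real' _ _ hh₁pos
      calc (G.card : ℝ) = ∑ v ∈ V, ((NN v).card : ℝ) := by rw [hGsum]; push_cast; rfl
        _ ≤ ∑ v ∈ V, ((h₁ : ℝ) * ((P v).card : ℝ) + h₁) := Finset.sum_le_sum hstep
        _ = (h₁:ℝ) * SSP + n * h₁ := by
            rw [Finset.sum_add_distrib, ← Finset.mul_sum, Finset.sum_const, nsmul_eq_mul,
              hSSPdef, hndef]
    have hSSP3 : n / 3 ≤ SSP := by
      have h1 : d₀ * n ≤ (h₁:ℝ) * SSP + n * h₁ := hGn ▸ hEle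
      have h2 : n * (h₁:ℝ) ≤ n * (3*d₀/4) := mul_le_mul_of_nonneg_left hh₁le (le_of_lt hn0)
      have h3 : (h₁:ℝ) * SSP ≤ (3*d₀/4) * SSP := mul_le_mul_of_nonneg_right hh₁le hSSPnn
      have h4 : d₀ * n / 4 ≤ (3*d₀/4) * SSP := by nlinarith
      nlinarith [hd₀pos]
    have hchoose1 : (d₀/4)^s / (s.factorial : ℝ) ≤ (h₁.choose s : ℝ) := by
      have h0 := Nat.pow_le_choose s h₁ (α := ℝ)
      have hcast : ((h₁ + 1 - s : ℕ) : ℝ) = (h₁ : ℝ) + 1 - s := by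
        rw [Nat.cast_sub (by omega)]
        push_cast
        ring
      rw [hcast] at h0
      refine le_trans ?_ h0
      have hbase : d₀/4 ≤ (h₁:ℝ)+1-(s:ℝ) := by linarith
      have hpow : (d₀/4)^s ≤ ((h₁:ℝ)+1-(s:ℝ))^s := pow_le_pow_left₀ (by linarith) hbase s
      exact (div_le_div_iff_of_pos_right hsfacpos).mpr hpow
    have hSSCNge : (n/3) * ((d₀/4)^s / (s.factorial:ℝ))
        ≤ ∑ S ∈ U.powersetCard s, ((CN S).card : ℝ) := by
      have hcastsum : (∑ S ∈ U.powersetCard s, ((CN S).card : ℝ))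
          = SSP * (h₁.choose s : ℝ) := by
        rw [← Nat.cast_sum, hsum1, Nat.cast_sum]
        push_cast
        rw [← Finset.sum_mul]
      rw [hcastsum]
      exact mul_le_mul hSSP3 hchoose1 (by positivity) hSSPnn
    have hMs : ((U.powersetCard s).card : ℝ) ≤ n^s / (s.factorial:ℝ) := by
      rw [Finset.card_powersetCard]
      have h0 : ((U.card.choose s : ℕ):ℝ) ≤ ((U.card:ℝ))^s / (s.factorial:ℝ) :=
        Nat.choose_le_pow_div s U.card
      refine le_trans h0 ?_
      have hUn : ((U.card:ℝ)) ≤ n := by rw [hndef]; exact_mod_cast hUVle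
      exact (div_le_div_iff_of_pos_right hsfacpos).mpr (pow_le_pow_left₀ (Nat.cast_nonneg _) hUn s)
    have hSSCNle : (∑ S ∈ U.powersetCard s, ((CN S).card : ℝ))
        ≤ (h₂:ℝ) * SSQ + (n^s/(s.factorial:ℝ)) * h₂ := by
      have hstep : ∀ S ∈ U.powersetCard s,
          ((CN S).card :ℝ) ≤ (h₂:ℝ) * ((Q S).card : ℝ) + h₂ := by
        intro S _
        rw [hQ1 S]
        exact StmtAux.natdiv_real' _ _ hh₂pos
      calc (∑ S ∈ U.powersetCard s, ((CN S).card : ℝ))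
          ≤ ∑ S ∈ U.powersetCard s, ((h₂:ℝ) * ((Q S).card:ℝ) + h₂) := Finset.sum_le_sum hstep
        _ = (h₂:ℝ) * SSQ + ((U.powersetCard s).card : ℝ) * h₂ := by
            rw [Finset.sum_add_distrib, ← Finset.mul_sum, Finset.sum_const, nsmul_eq_mul]
        _ ≤ (h₂:ℝ) * SSQ + (n^s/(s.factorial:ℝ)) * h₂ := by
            have := mul_le_mul_of_nonneg_right hMs (Nat.cast_nonneg h₂)
            linarith
    have hkey : d₀^s * n = L^s * n^s := by
      rw [hd₀def, mul_pow]
      have h1 : (n ^ (1 - 1/(s:ℝ)))^s = n ^ ((1 - 1/(s:ℝ)) * s) := by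
        rw [← Real.rpow_natCast (n ^ (1 - 1/(s:ℝ))) s, ← Real.rpow_mul hn0.le]
      have h2 : (1 - 1/(s:ℝ)) * s = (s:ℝ) - 1 := by
        field_simp
      have h3 : n ^ ((s:ℝ) - 1) = n ^ (s - 1 : ℕ) := by
        rw [← Real.rpow_natCast n (s - 1)]
        congr 1
        rw [Nat.cast_sub hs0]
        push_cast
        ring
      rw [h1, h2, h3, mul_assoc, ← pow_succ, Nat.sub_add_cancel (by omega)]
    have h2' : (h₂:ℝ) ≤ L^s/(6*4^s) := by
      have he : 2 * ε = 1 / (6 * 4^s) := by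
        rw [hεdef, pow_succ]
        field_simp
        ring
      calc (h₂:ℝ) ≤ 2*(ε*L^s) := hh₂le
        _ = (2*ε) * L^s := by ring
        _ = L^s/(6*4^s) := by rw [he]; ring
    have hA1' : (n/3) * ((d₀/4)^s / (s.factorial:ℝ))
        = 2 * ((L^s * n^s) / (6 * 4^s * (s.factorial:ℝ))) := by
      have hstep : (n/3) * ((d₀/4)^s / (s.factorial:ℝ))
          = (d₀^s * n) / (3 * 4^s * (s.factorial:ℝ)) := by
        rw [div_pow]
        field_simp
      rw [hstep, hkey]
      field_simp
      ring
    have hB1' : (n^s/(s.factorial:ℝ)) * (h₂:ℝ) ≤ (L^s * n^s) / (6 * 4^s * (s.factorial:ℝ)) := by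
      calc (n^s/(s.factorial:ℝ)) * (h₂:ℝ) ≤ (n^s/(s.factorial:ℝ)) * (L^s/(6*4^s)) := by
            apply mul_le_mul_of_nonneg_left h2' (by positivity)
        _ = (L^s * n^s)/(6*4^s*(s.factorial:ℝ)) := by
            field_simp
    have hSSQh₂ : (L^s * n^s) / (6 * 4^s * (s.factorial:ℝ)) ≤ (h₂:ℝ) * SSQ := by
      have := le_trans hSSCNge hSSCNle
      linarith [hA1', hB1']
    have hSSQn : n^s / (s.factorial:ℝ) ≤ SSQ := by
      have hml : (h₂:ℝ) * SSQ ≤ (L^s/(6*4^s)) * SSQ := mul_le_mul_of_nonneg_right h2' hSSQnn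
      have hZeq : (L^s * n^s)/(6*4^s*(s.factorial:ℝ))
          = (n^s/(s.factorial:ℝ)) * (L^s/(6*4^s)) := by
        field_simp
      have hfin : (n^s/(s.factorial:ℝ)) * (L^s/(6*4^s)) ≤ SSQ * (L^s/(6*4^s)) := by
        rw [← hZeq]
        calc (L^s * n^s)/(6*4^s*(s.factorial:ℝ)) ≤ (h₂:ℝ) * SSQ := hSSQh₂
          _ ≤ (L^s/(6*4^s)) * SSQ := hml
          _ = SSQ * (L^s/(6*4^s)) := mul_comm _ _
      exact le_of_mul_le_mul_right hfin (by positivity)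
    have hchoose2 : (ε*L^s/2)^t / (t.factorial:ℝ) ≤ (h₂.choose t : ℝ) := by
      have h0 := Nat.pow_le_choose t h₂ (α := ℝ)
      have hcast : ((h₂ + 1 - t : ℕ):ℝ) = (h₂:ℝ) + 1 - t := by
        rw [Nat.cast_sub (by omega)]
        push_cast
        ring
      rw [hcast] at h0
      refine le_trans ?_ h0
      have hbase : ε*L^s/2 ≤ (h₂:ℝ)+1-(t:ℝ) := by linarith
      have hpow : (ε*L^s/2)^t ≤ ((h₂:ℝ)+1-(t:ℝ))^t := pow_le_pow_left₀ (by positivity) hbase t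
      exact (div_le_div_iff_of_pos_right htfacpos).mpr hpow
    have hcount : (n^s/(s.factorial:ℝ)) * ((ε*L^s/2)^t / (t.factorial:ℝ)) ≤ (𝒢.card : ℝ) := by
      have hcast𝒢 : (𝒢.card : ℝ) = SSQ * (h₂.choose t : ℝ) := by
        rw [hcard𝒢, Nat.cast_sum]
        push_cast
        rw [← Finset.sum_mul]
      rw [hcast𝒢]
      exact mul_le_mul hSSQn hchoose2 (by positivity) hSSQnn
    have hrw1 : L ^ ((s:ℝ)*(t:ℝ)) = (L^s)^t := by
      rw [show ((s:ℝ) * (t:ℝ)) = ((s*t : ℕ):ℝ) by push_cast; ring, Real.rpow_natCast, pow_mul]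
    have hrw2 : n ^ ((s:ℝ)) = n^(s:ℕ) := Real.rpow_natCast n s
    rw [hrw1, hrw2]
    refine le_trans (le_of_eq ?_) hcount
    rw [show (ε*L^s/2)^t = (ε/2)^t * (L^s)^t by rw [← mul_pow]; ring_nf]
    field_simp
  · -- bullet 3 : the degree condition
    intro σ' hσG hA1 hB1
    set A : Finset α := (σ'.biUnion id) ∩ U with hAdef
    set B : Finset α := (σ'.biUnion id) ∩ V with hBdef
    have hABsub : ∀ K, K ∈ 𝒢 → σ' ⊆ K → ∃ S γ T, S ∈ U.powersetCard s ∧ γ ∈ Q S ∧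
        T ∈ γ.powersetCard t ∧ K = StmtAux.edgeF S T ∧ A ⊆ S ∧ B ⊆ T := by
      intro K hK hσK
      obtain ⟨S, hS, γ, hγ, T, hT, hKe⟩ := (hmem𝒢 K).1 hK
      obtain ⟨hSU, hScard, hSne, hTV, hTcard, hTne, hTCN⟩ := hstruct hS hγ hT
      obtain ⟨e1, e2⟩ := StmtAux.edgeF_recover hUV hSU hTV hSne hTne
      have hsub : σ'.biUnion id ⊆ (StmtAux.edgeF S T).biUnion id := by
        apply Finset.biUnion_subset_biUnion_of_subset_left
        rw [hKe]
        exact hσK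
      have hAS : A ⊆ S := by
        rw [hAdef, ← e1]
        exact Finset.inter_subset_inter hsub Subset.rfl
      have hBT : B ⊆ T := by
        rw [hBdef, ← e2]
        exact Finset.inter_subset_inter hsub Subset.rfl
      exact ⟨S, γ, T, hS, hγ, hT, hKe.symm, hAS, hBT⟩
    by_cases hab : A.card ≤ s ∧ B.card ≤ t
    · obtain ⟨has, hbt⟩ := hab
      obtain ⟨u₀, hu₀⟩ := Finset.card_pos.1 hA1
      obtain ⟨v₀, hv₀⟩ := Finset.card_pos.1 hB1
      set X : Finset (Finset α) :=
        ((P v₀).biUnion fun β => β.powersetCard s).filter (fun S' => A ⊆ S') with hXdef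
      set Y : Finset α → Finset (Finset α) :=
        fun S' => (((Q S').biUnion fun γ => γ.powersetCard t).filter fun T' => B ⊆ T') with hYdef
      have hYcard : ∀ S', (Y S').card ≤ (h₂ - B.card).choose (t - B.card) := by
        intro S'
        by_cases hY : (Y S').Nonempty
        · obtain ⟨T₀, hT₀⟩ := hY
          rw [hYdef] at hT₀
          simp only [Finset.mem_filter, Finset.mem_biUnion] at hT₀
          obtain ⟨⟨γ₀, hγ₀, hT₀γ⟩, hBT₀⟩ := hT₀
          have hsubY : Y S' ⊆ (γ₀.powersetCard t).filter fun T' => B ⊆ T' := by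
            intro T hT
            rw [hYdef] at hT
            simp only [Finset.mem_filter, Finset.mem_biUnion] at hT
            obtain ⟨⟨γ, hγ, hTγ⟩, hBT⟩ := hT
            have hγeq : γ = γ₀ := by
              by_contra hne
              exact Finset.disjoint_left.1 (hQ3 S' γ hγ γ₀ hγ₀ hne)
                ((Finset.mem_powersetCard.1 hTγ).1 (hBT hv₀))
                ((Finset.mem_powersetCard.1 hT₀γ).1 (hBT₀ hv₀))
            rw [Finset.mem_filter]
            exact ⟨hγeq ▸ hTγ, hBT⟩
          have hBγ₀ : B ⊆ γ₀ := hBT₀.trans (Finset.mem_powersetCard.1 hT₀γ).1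
          calc (Y S').card ≤ _ := Finset.card_le_card hsubY
            _ ≤ (γ₀.card - B.card).choose (t - B.card) := StmtAux.card_superset_le _ _ _ hBγ₀
            _ = (h₂ - B.card).choose (t - B.card) := by rw [(hQ2 S' γ₀ hγ₀).2]
        · rw [Finset.not_nonempty_iff_eq_empty.1 hY]
          simp
      have hXcard : X.card ≤ (h₁ - A.card).choose (s - A.card) := by
        by_cases hX : X.Nonempty
        · obtain ⟨S₀, hS₀⟩ := hX
          rw [hXdef] at hS₀
          simp only [Finset.mem_filter, Finset.mem_biUnion] at hS₀
          obtain ⟨⟨β₀, hβ₀, hS₀β⟩, hAS₀⟩ := hS₀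
          have hsubX : X ⊆ (β₀.powersetCard s).filter fun S' => A ⊆ S' := by
            intro S hSX
            rw [hXdef] at hSX
            simp only [Finset.mem_filter, Finset.mem_biUnion] at hSX
            obtain ⟨⟨β, hβ, hSβ⟩, hAS⟩ := hSX
            have hβeq : β = β₀ := by
              by_contra hne
              exact Finset.disjoint_left.1 (hP3 v₀ β hβ β₀ hβ₀ hne)
                ((Finset.mem_powersetCard.1 hSβ).1 (hAS hu₀))
                ((Finset.mem_powersetCard.1 hS₀β).1 (hAS₀ hu₀))
            rw [Finset.mem_filter]
            exact ⟨hβeq ▸ hSβ, hAS⟩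
          have hAβ₀ : A ⊆ β₀ := hAS₀.trans (Finset.mem_powersetCard.1 hS₀β).1
          calc X.card ≤ _ := Finset.card_le_card hsubX
            _ ≤ (β₀.card - A.card).choose (s - A.card) := StmtAux.card_superset_le _ _ _ hAβ₀
            _ = (h₁ - A.card).choose (s - A.card) := by rw [(hP2 v₀ β₀ hβ₀).2]
        · rw [Finset.not_nonempty_iff_eq_empty.1 hX]
          simp
      have hmain : colDeg 𝒢 σ' ≤ X.card * ((h₂ - B.card).choose (t - B.card)) := by
        unfold colDeg
        rw [Finset.filter_congr_decidable]
        set 𝒯 : Finset (Finset α × Finset α) :=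
          X.biUnion (fun S' => (Y S').image fun T' => (S', T')) with h𝒯def
        have hstep : (𝒢.filter fun K => σ' ⊆ K).card ≤ 𝒯.card := by
          apply Finset.card_le_card_of_injOn (fun K => (K.biUnion id ∩ U, K.biUnion id ∩ V))
          · intro K hK
            obtain ⟨hK𝒢, hσK⟩ := Finset.mem_filter.1 hK
            obtain ⟨S, γ, T, hS, hγ, hT, hKe, hAS, hBT⟩ := hABsub K hK𝒢 hσK
            obtain ⟨hSU, hScard, hSne, hTV, hTcard, hTne, hTCN⟩ := hstruct hS hγ hT
            obtain ⟨e1, e2⟩ := StmtAux.edgeF_recover hUV hSU hTV hSne hTne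
            rw [hKe]
            rw [h𝒯def]
            simp only [Finset.mem_coe, Finset.mem_biUnion, Finset.mem_image]
            rw [e1, e2]
            refine ⟨S, ?_, T, ?_, rfl⟩
            · rw [hXdef]
              simp only [Finset.mem_filter, Finset.mem_biUnion]
              have hv₀CN : v₀ ∈ CN S := hTCN (hBT hv₀)
              rw [hCNdef] at hv₀CN
              simp only [Finset.mem_filter] at hv₀CN
              obtain ⟨_, β, hβ, hSβ⟩ := hv₀CN
              exact ⟨⟨β, hβ, Finset.mem_powersetCard.2 ⟨hSβ, hScard⟩⟩, hAS⟩
            · rw [hYdef]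
              simp only [Finset.mem_filter, Finset.mem_biUnion]
              exact ⟨⟨γ, hγ, hT⟩, hBT⟩
          · intro K₁ hK₁ K₂ hK₂ heq
            simp only [Prod.mk.injEq] at heq
            obtain ⟨hK₁𝒢, hσK₁⟩ := Finset.mem_filter.1 (Finset.mem_coe.1 hK₁)
            obtain ⟨hK₂𝒢, hσK₂⟩ := Finset.mem_filter.1 (Finset.mem_coe.1 hK₂)
            obtain ⟨S₁, γ₁, T₁, hS₁, hγ₁, hT₁, hKe₁, _, _⟩ := hABsub K₁ hK₁𝒢 hσK₁
            obtain ⟨S₂, γ₂, T₂, hS₂, hγ₂, hT₂, hKe₂, _, _⟩ := hABsub K₂ hK₂𝒢 hσK₂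
            obtain ⟨hSU₁, hScard₁, hSne₁, hTV₁, hTcard₁, hTne₁, _⟩ := hstruct hS₁ hγ₁ hT₁
            obtain ⟨hSU₂, hScard₂, hSne₂, hTV₂, hTcard₂, hTne₂, _⟩ := hstruct hS₂ hγ₂ hT₂
            obtain ⟨e11, e12⟩ := StmtAux.edgeF_recover hUV hSU₁ hTV₁ hSne₁ hTne₁
            obtain ⟨e21, e22⟩ := StmtAux.edgeF_recover hUV hSU₂ hTV₂ hSne₂ hTne₂
            rw [hKe₁, hKe₂] at heq
            rw [e11, e12, e21, e22] at heq
            rw [hKe₁, hKe₂, heq.1, heq.2]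
        have h𝒯card : 𝒯.card ≤ X.card * ((h₂ - B.card).choose (t - B.card)) := by
          refine le_trans Finset.card_biUnion_le ?_
          refine le_trans (Finset.sum_le_sum fun S' _ =>
            le_trans Finset.card_image_le (hYcard S')) ?_
          rw [Finset.sum_const, smul_eq_mul]
        exact le_trans hstep h𝒯card
      -- cast to the reals
      have hXr : (X.card : ℝ) ≤ (h₁:ℝ)^(s - A.card) := by
        have h1 : X.card ≤ h₁^(s - A.card) :=
          le_trans hXcard (le_trans (Nat.choose_le_pow _ _)
            (Nat.pow_le_pow_left (Nat.sub_le _ _) _))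
        calc (X.card:ℝ) ≤ ((h₁^(s - A.card) : ℕ):ℝ) := by exact_mod_cast h1
          _ = (h₁:ℝ)^(s - A.card) := by push_cast; rfl
      have hYr : (((h₂ - B.card).choose (t - B.card) : ℕ):ℝ) ≤ (h₂:ℝ)^(t - B.card) := by
        have h1 : (h₂ - B.card).choose (t - B.card) ≤ h₂^(t - B.card) :=
          le_trans (Nat.choose_le_pow _ _) (Nat.pow_le_pow_left (Nat.sub_le _ _) _)
        calc (((h₂ - B.card).choose (t - B.card) : ℕ):ℝ) ≤ ((h₂^(t - B.card) : ℕ):ℝ) := by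
              exact_mod_cast h1
          _ = (h₂:ℝ)^(t - B.card) := by push_cast; rfl
      have hre1 : (L * n ^ (1 - 1/(s:ℝ))) ^ ((s:ℝ) - (A.card:ℝ)) = d₀ ^ (s - A.card : ℕ) := by
        rw [← hd₀def, show (s:ℝ) - (A.card:ℝ) = ((s - A.card : ℕ):ℝ) by
          rw [Nat.cast_sub has], Real.rpow_natCast]
      have hre2 : (L ^ (s:ℝ)) ^ ((t:ℝ) - (B.card:ℝ)) = (L^s) ^ (t - B.card : ℕ) := by
        rw [show (L ^ (s:ℝ)) = L ^ (s:ℕ) from Real.rpow_natCast L s,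
          show (t:ℝ) - (B.card:ℝ) = ((t - B.card : ℕ):ℝ) by
            rw [Nat.cast_sub hbt], Real.rpow_natCast]
      rw [hre1, hre2, one_mul]
      calc (colDeg 𝒢 σ' : ℝ)
          ≤ ((X.card * ((h₂ - B.card).choose (t - B.card)) : ℕ) : ℝ) := by exact_mod_cast hmain
        _ = (X.card : ℝ) * (((h₂ - B.card).choose (t - B.card) : ℕ):ℝ) := by push_cast; rfl
        _ ≤ (h₁:ℝ)^(s - A.card) * (h₂:ℝ)^(t - B.card) := by
            exact mul_le_mul hXr hYr (Nat.cast_nonneg _) (by positivity)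
        _ ≤ d₀ ^ (s - A.card) * (L^s) ^ (t - B.card) := by
            refine mul_le_mul ?_ ?_ (by positivity) (by positivity)
            · exact pow_le_pow_left₀ (Nat.cast_nonneg _) hh₁d₀ _
            · exact pow_le_pow_left₀ (Nat.cast_nonneg _) hh₂Ls _
    · -- degenerate case : no copy can contain σ'
      have hzero : colDeg 𝒢 σ' = 0 := by
        unfold colDeg
        rw [Finset.filter_congr_decidable, Finset.card_eq_zero, Finset.filter_eq_empty_iff]
        intro K hK hσK
        obtain ⟨S, γ, T, hS, hγ, hT, hKe, hAS, hBT⟩ := hABsub K hK hσK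
        obtain ⟨_, hScard, _, _, hTcard, _, _⟩ := hstruct hS hγ hT
        exact hab ⟨hScard ▸ Finset.card_le_card hAS, hTcard ▸ Finset.card_le_card hBT⟩
      rw [hzero]
      push_cast
      refine mul_nonneg (mul_nonneg zero_le_one (Real.rpow_nonneg ?_ _)) (Real.rpow_nonneg ?_ _)
      · exact mul_nonneg hL0.le (Real.rpow_nonneg hn0.le _)
      · exact Real.rpow_nonneg hL0.le _
end

section
/- Let π, A, B be real numbers with A ≥ B > 0 and let s, t ≥ 1 be integers. Suppose π ≥ B^{−1} and π ≥ (A^{s−1}·B^{t−1})^{−1/(st−1)}. Then for all integers a, b with 1 ≤ a ≤ s and 1 ≤ b ≤ t, we have π^{1−ab}·A^{1−a}·B^{1−b} ≤ 1. -/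
set_option maxHeartbeats 1000000


theorem stmt_6 (p A B : ℝ) (s t : ℕ) (hs : 1 ≤ s) (ht : 1 ≤ t)
    (hB : 0 < B) (hAB : B ≤ A)
    (hp1 : B⁻¹ ≤ p)
    (hp2 : (A ^ ((s : ℝ) - 1) * B ^ ((t : ℝ) - 1)) ^ (-1 / ((s : ℝ) * t - 1)) ≤ p) :
    ∀ a b : ℕ, 1 ≤ a → a ≤ s → 1 ≤ b → b ≤ t →
      p ^ (1 - (a : ℝ) * b) * A ^ (1 - (a : ℝ)) * B ^ (1 - (b : ℝ)) ≤ 1 := by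
  have hA : 0 < A := lt_of_lt_of_le hB hAB
  have hp : 0 < p := lt_of_lt_of_le (inv_pos.mpr hB) hp1
  intro a b ha1 has hb1 hbt
  set x := Real.log p with hx
  set α := Real.log A with hα
  set β := Real.log B with hβ
  have hxβ : -β ≤ x := by
    have := Real.log_le_log (inv_pos.mpr hB) hp1
    rwa [Real.log_inv] at this
  have hαβ : β ≤ α := Real.log_le_log hB hAB
  have hbase : 0 < A ^ ((s:ℝ)-1) * B ^ ((t:ℝ)-1) := by positivity
  have h2 : (-1 / ((s:ℝ)*t - 1)) * (((s:ℝ)-1)*α + ((t:ℝ)-1)*β) ≤ x := by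
    have := Real.log_le_log (Real.rpow_pos_of_pos hbase _) hp2
    rwa [Real.log_rpow hbase, Real.log_mul (ne_of_gt (Real.rpow_pos_of_pos hA _))
      (ne_of_gt (Real.rpow_pos_of_pos hB _)), Real.log_rpow hA, Real.log_rpow hB] at this
  rw [Real.rpow_def_of_pos hp, Real.rpow_def_of_pos hA, Real.rpow_def_of_pos hB,
    ← Real.exp_add, ← Real.exp_add, ← hx, ← hα, ← hβ, Real.exp_le_one_iff]
  have haR : (1:ℝ) ≤ (a:ℝ) := by exact_mod_cast ha1
  have hbR : (1:ℝ) ≤ (b:ℝ) := by exact_mod_cast hb1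
  have hsaR : (a:ℝ) ≤ (s:ℝ) := by exact_mod_cast has
  have htbR : (b:ℝ) ≤ (t:ℝ) := by exact_mod_cast hbt
  rcases eq_or_lt_of_le ha1 with ha | ha
  · -- a = 1
    have : a = 1 := ha.symm
    subst this
    push_cast
    nlinarith [mul_nonneg (sub_nonneg.mpr hbR) (by linarith : (0:ℝ) ≤ x + β)]
  rcases eq_or_lt_of_le hb1 with hb | hb
  · -- b = 1
    have : b = 1 := hb.symm
    subst this
    push_cast
    nlinarith [mul_nonneg (sub_nonneg.mpr haR) (by linarith : (0:ℝ) ≤ x + α)]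
  -- a ≥ 2, b ≥ 2, hence s ≥ 2, t ≥ 2
  have ha2 : (2:ℝ) ≤ (a:ℝ) := by exact_mod_cast ha
  have hb2 : (2:ℝ) ≤ (b:ℝ) := by exact_mod_cast hb
  have hs2 : (2:ℝ) ≤ (s:ℝ) := le_trans ha2 hsaR
  have ht2 : (2:ℝ) ≤ (t:ℝ) := le_trans hb2 htbR
  have hD : (0:ℝ) < (s:ℝ)*t - 1 := by nlinarith
  have h2' : -(((s:ℝ)-1)*α + ((t:ℝ)-1)*β) ≤ x * ((s:ℝ)*t - 1) := by
    rw [show (-1/((s:ℝ)*t-1)) * (((s:ℝ)-1)*α + ((t:ℝ)-1)*β)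
        = (-(((s:ℝ)-1)*α + ((t:ℝ)-1)*β))/((s:ℝ)*t-1) by ring] at h2
    exact (div_le_iff₀ hD).mp h2
  have hT1 : 0 ≤ ((s:ℝ)-a) * ((b:ℝ)-1) * ((t:ℝ)-1) * (x + β) := by
    exact mul_nonneg (mul_nonneg (mul_nonneg (by linarith) (by linarith)) (by linarith)) (by linarith)
  have hT2 : 0 ≤ ((a:ℝ)-1) * ((t:ℝ)-b) * ((s:ℝ)-1) * (x + α) := by
    exact mul_nonneg (mul_nonneg (mul_nonneg (by linarith) (by linarith)) (by linarith)) (by linarith)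
  have hT3 : 0 ≤ ((a:ℝ)-1) * ((b:ℝ)-1) * (x * ((s:ℝ)*t - 1) + ((s:ℝ)-1)*α + ((t:ℝ)-1)*β) := by
    exact mul_nonneg (mul_nonneg (by linarith) (by linarith)) (by linarith)
  have hident : ((s:ℝ)-1) * ((t:ℝ)-1) * (((a:ℝ)*b - 1)*x + ((a:ℝ)-1)*α + ((b:ℝ)-1)*β)
      = ((s:ℝ)-a) * ((b:ℝ)-1) * ((t:ℝ)-1) * (x + β)
      + ((a:ℝ)-1) * ((t:ℝ)-b) * ((s:ℝ)-1) * (x + α)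
      + ((a:ℝ)-1) * ((b:ℝ)-1) * (x * ((s:ℝ)*t - 1) + ((s:ℝ)-1)*α + ((t:ℝ)-1)*β) := by
    ring
  nlinarith [hident, hT1, hT2, hT3, mul_pos (by linarith : (0:ℝ) < (s:ℝ)-1) (by linarith : (0:ℝ) < (t:ℝ)-1)]
end

section
/- Let r, s, t ≥ 3 be integers with t ≥ s. Then every subhypergraph F' of the expansion K_{s,t}^{(r)} with at least 2 edges satisfies (|F'| − 1)/(v(F') − r) ≤ (st − 1)/((r−2)st + s + t − r), with equality when F' = K_{s,t}^{(r)}. Consequently, d_r(K^{(r)}_{s,t}) = (st−1)/((r−2)st + s + t − r). -/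
open Finset Real

namespace S17

variable (s t r : ℕ)

abbrev V := Fin s ⊕ (Fin t ⊕ Fin s × Fin t × Fin (r - 2))

def edge (ij : Fin s × Fin t) : Finset (V s t r) :=
  insert (Sum.inl ij.1) (insert (Sum.inr (Sum.inl ij.2))
    ((Finset.univ : Finset (Fin (r - 2))).image fun k => Sum.inr (Sum.inr (ij.1, ij.2, k))))

lemma edge_injective : Function.Injective (edge s t r) := by
  intro ij ij' h
  have h1 : (Sum.inl ij.1 : V s t r) ∈ edge s t r ij' := by
    rw [← h]; simp [edge]
  have h2 : (Sum.inr (Sum.inl ij.2) : V s t r) ∈ edge s t r ij' := by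
    rw [← h]; simp [edge]
  simp [edge] at h1 h2
  exact Prod.ext h1 h2

lemma edge_card (hr : 3 ≤ r) (ij : Fin s × Fin t) : (edge s t r ij).card = r := by
  rw [edge, card_insert_of_notMem (by simp), card_insert_of_notMem (by simp),
    card_image_of_injective _ (by intro a b h; simpa using h)]
  simp only [card_univ, Fintype.card_fin]
  omega

lemma biUnion_card (S : Finset (Fin s × Fin t)) :
    (S.biUnion (edge s t r)).card =
      (S.image Prod.fst).card + (S.image Prod.snd).card + S.card * (r - 2) := by
  have he : S.biUnion (edge s t r) =
      ((S.image Prod.fst).image Sum.inl ∪ (S.image Prod.snd).image (fun j => Sum.inr (Sum.inl j)))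
        ∪ (S ×ˢ (univ : Finset (Fin (r-2)))).image
            (fun p => Sum.inr (Sum.inr (p.1.1, p.1.2, p.2))) := by
    ext x
    simp only [mem_biUnion, mem_union, mem_image, mem_product, mem_univ, edge, mem_insert,
      and_true]
    aesop
  have c3 : #(image (fun p => (Sum.inr (Sum.inr (p.1.1, p.1.2, p.2)) : V s t r)) (S ×ˢ (univ : Finset (Fin (r-2))))) = #S * (r - 2) := by
    rw [card_image_of_injective _ (by
      intro a b h
      simp only [Sum.inr.injEq, Prod.mk.injEq] at h
      exact Prod.ext (Prod.ext h.1 h.2.1) h.2.2)]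
    simp [card_product]
  rw [he, card_union_of_disjoint, card_union_of_disjoint,
    card_image_of_injective _ Sum.inl_injective,
    card_image_of_injective _ (show Function.Injective (fun j : Fin t => (Sum.inr (Sum.inl j) : V s t r)) from fun a b h => by simpa using h), c3]
  · simp [disjoint_left]
  · simp [disjoint_left]

lemma key_ineq (r s t a b m : ℕ) (hr : 3 ≤ r) (hs : 3 ≤ s) (ht : 3 ≤ t)
    (ha1 : 1 ≤ a) (hb1 : 1 ≤ b) (has : a ≤ s) (hbt : b ≤ t) (hm2 : 2 ≤ m) (hmab : m ≤ a * b) :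
    ((m : ℝ) - 1) / (((r : ℝ) - 2) * m + a + b - r) ≤
      ((s : ℝ) * t - 1) / (((r : ℝ) - 2) * s * t + s + t - r) := by
  have hab : 3 ≤ a + b := by nlinarith
  have hR : (3:ℝ) ≤ r := by exact_mod_cast hr
  have hS : (3:ℝ) ≤ s := by exact_mod_cast hs
  have hT : (3:ℝ) ≤ t := by exact_mod_cast ht
  have hA1 : (1:ℝ) ≤ a := by exact_mod_cast ha1
  have hB1 : (1:ℝ) ≤ b := by exact_mod_cast hb1
  have hAS : (a:ℝ) ≤ s := by exact_mod_cast has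
  have hBT : (b:ℝ) ≤ t := by exact_mod_cast hbt
  have hM2 : (2:ℝ) ≤ m := by exact_mod_cast hm2
  have hMAB : (m:ℝ) ≤ a * b := by exact_mod_cast hmab
  have hAB : (3:ℝ) ≤ a + b := by exact_mod_cast hab
  have hd1 : (0:ℝ) < ((r : ℝ) - 2) * m + a + b - r := by nlinarith
  have hd2 : (0:ℝ) < ((r : ℝ) - 2) * s * t + s + t - r := by
    nlinarith [mul_nonneg (by linarith : (0:ℝ) ≤ (r:ℝ)-2) (by nlinarith : (0:ℝ) ≤ (s:ℝ)*t - 9)]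
  rw [div_le_div_iff₀ hd1 hd2]
  have hE : ((s:ℝ) * t - 1) * (((r : ℝ) - 2) * m + a + b - r) -
      ((m:ℝ) - 1) * (((r : ℝ) - 2) * s * t + s + t - r) =
      ((t:ℝ) - 1) * (s - a) * (b - 1) + ((s:ℝ) - 1) * (a - 1) * (t - b) +
        ((s:ℝ) + t - 2) * (a * b - m) := by ring
  nlinarith [mul_nonneg (mul_nonneg (by linarith : (0:ℝ) ≤ (t:ℝ)-1) (by linarith : (0:ℝ) ≤ (s:ℝ)-(a:ℝ))) (by linarith : (0:ℝ) ≤ (b:ℝ)-1),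
    mul_nonneg (mul_nonneg (by linarith : (0:ℝ) ≤ (s:ℝ)-1) (by linarith : (0:ℝ) ≤ (a:ℝ)-1)) (by linarith : (0:ℝ) ≤ (t:ℝ)-(b:ℝ)),
    mul_nonneg (by linarith : (0:ℝ) ≤ (s:ℝ)+t-2) (by linarith : (0:ℝ) ≤ (a:ℝ)*b-m)]

end S17

/-- The `r`-density `d_r(F)` of an `r`-graph `F`, where `v(F')` is the number of
vertices covered by the edges of `F'`. -/
noncomputable def rDensity (r : ℕ) {α : Type*} [DecidableEq α]
    (F : Finset (Finset α)) : ℝ :=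
  sSup {x : ℝ | ∃ F' ∈ F.powerset, 2 ≤ F'.card ∧
    x = ((F'.card : ℝ) - 1) / (((F'.biUnion id).card : ℝ) - r)}

namespace S17

lemma KstExp_eq (s t r : ℕ) : KstExp s t r = Finset.image (edge s t r) Finset.univ := rfl

lemma main_bound (r s t : ℕ) (hr : 3 ≤ r) (hs : 3 ≤ s) (ht : 3 ≤ t)
    (F' : Finset (Finset (V s t r))) (hF' : F' ⊆ KstExp s t r) (hcard : 2 ≤ F'.card) :
    ((F'.card : ℝ) - 1) / (((F'.biUnion id).card : ℝ) - r) ≤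
      ((s : ℝ) * t - 1) / (((r : ℝ) - 2) * s * t + s + t - r) := by
  classical
  set S : Finset (Fin s × Fin t) := Finset.univ.filter (fun ij => edge s t r ij ∈ F') with hS
  have hSF : S.image (edge s t r) = F' := by
    ext x
    simp only [hS, mem_image, mem_filter, mem_univ, true_and]
    constructor
    · rintro ⟨ij, hij, rfl⟩; exact hij
    · intro hx
      have := hF' hx
      rw [KstExp_eq] at this
      obtain ⟨ij, -, hij⟩ := mem_image.mp this
      exact ⟨ij, by rwa [hij], hij⟩
  have hmcard : S.card = F'.card := by
    rw [← hSF, card_image_of_injective _ (edge_injective s t r)]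
  set a := (S.image Prod.fst).card with ha
  set b := (S.image Prod.snd).card with hb
  have hbu : F'.biUnion id = S.biUnion (edge s t r) := by
    rw [← hSF, image_biUnion]
    rfl
  have hbc : (F'.biUnion id).card = a + b + S.card * (r - 2) := by
    rw [hbu, biUnion_card]
  have hSne : S.Nonempty := card_pos.mp (by omega)
  have ha1 : 1 ≤ a := card_pos.mpr (hSne.image _)
  have hb1 : 1 ≤ b := card_pos.mpr (hSne.image _)
  have has : a ≤ s := le_trans (card_le_univ _) (by simp)
  have hbt : b ≤ t := le_trans (card_le_univ _) (by simp)
  have hmab : S.card ≤ a * b := by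
    have hsub : S ⊆ (S.image Prod.fst) ×ˢ (S.image Prod.snd) := by
      intro x hx
      rw [mem_product]
      exact ⟨mem_image_of_mem _ hx, mem_image_of_mem _ hx⟩
    calc S.card ≤ ((S.image Prod.fst) ×ˢ (S.image Prod.snd)).card := card_le_card hsub
    _ = a * b := by rw [card_product]
  have key := key_ineq r s t a b S.card hr hs ht ha1 hb1 has hbt (by omega) hmab
  have hnum : (F'.card : ℝ) = (S.card : ℝ) := by exact_mod_cast hmcard.symm
  have hden : ((F'.biUnion id).card : ℝ) - r = ((r : ℝ) - 2) * S.card + a + b - r := by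
    rw [hbc]
    push_cast [Nat.cast_sub (by omega : 2 ≤ r)]
    ring
  rw [hnum, hden]
  exact key

lemma kst_card (s t r : ℕ) : (KstExp s t r).card = s * t := by
  rw [KstExp_eq, card_image_of_injective _ (edge_injective s t r)]
  simp

lemma kst_biUnion_card (s t r : ℕ) (hs : 3 ≤ s) (ht : 3 ≤ t) :
    ((KstExp s t r).biUnion id).card = s + t + s * t * (r - 2) := by
  have : Nonempty (Fin s) := ⟨⟨0, by omega⟩⟩
  have : Nonempty (Fin t) := ⟨⟨0, by omega⟩⟩
  rw [KstExp_eq, image_biUnion]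
  have := biUnion_card s t r Finset.univ
  rw [show (Finset.univ : Finset (Fin s × Fin t)).biUnion (edge s t r) =
    Finset.univ.biUnion (fun a => id (edge s t r a)) from rfl] at this
  rw [this, Finset.image_univ_of_surjective Prod.fst_surjective,
    Finset.image_univ_of_surjective Prod.snd_surjective]
  simp

end S17

theorem stmt_17 (r s t : ℕ) (hr : 3 ≤ r) (hs : 3 ≤ s) (ht : 3 ≤ t) (hst : s ≤ t) :
    (∀ F' ⊆ KstExp s t r, 2 ≤ F'.card →
      ((F'.card : ℝ) - 1) / (((F'.biUnion id).card : ℝ) - r) ≤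
        ((s : ℝ) * t - 1) / (((r : ℝ) - 2) * s * t + s + t - r)) ∧
    (((KstExp s t r).card : ℝ) - 1) / ((((KstExp s t r).biUnion id).card : ℝ) - r) =
      ((s : ℝ) * t - 1) / (((r : ℝ) - 2) * s * t + s + t - r) ∧
    rDensity r (KstExp s t r) =
      ((s : ℝ) * t - 1) / (((r : ℝ) - 2) * s * t + s + t - r) := by
  have hpart1 := fun F' h1 h2 => S17.main_bound r s t hr hs ht F' h1 h2
  have hcardK : 2 ≤ (KstExp s t r).card := by rw [S17.kst_card]; nlinarith
  have hpart2 : (((KstExp s t r).card : ℝ) - 1) / ((((KstExp s t r).biUnion id).card : ℝ) - r) =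
      ((s : ℝ) * t - 1) / (((r : ℝ) - 2) * s * t + s + t - r) := by
    rw [S17.kst_card, S17.kst_biUnion_card s t r hs ht]
    congr 1
    · push_cast; ring
    · push_cast [Nat.cast_sub (by omega : 2 ≤ r)]; ring
  refine ⟨hpart1, hpart2, ?_⟩
  rw [rDensity]
  apply le_antisymm
  · apply csSup_le
    · exact ⟨_, KstExp s t r, Finset.mem_powerset_self _, hcardK, rfl⟩
    · rintro x ⟨F', hF', h2, rfl⟩
      exact hpart1 F' (Finset.mem_powerset.mp hF') h2
  · apply le_csSup
    · exact ⟨((s : ℝ) * t - 1) / (((r : ℝ) - 2) * s * t + s + t - r), by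
        rintro x ⟨F', hF', h2, rfl⟩
        exact hpart1 F' (Finset.mem_powerset.mp hF') h2⟩
    · exact ⟨KstExp s t r, Finset.mem_powerset_self _, hcardK, hpart2.symm⟩
end
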